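/- Let E be a real inner product space, let u, u₁, …, uₙ be elements of E, and let σ > 0. Let K be the n×n real matrix with entries K i j = ⟪uᵢ, uⱼ⟫, let κ ∈ ℝⁿ have entries κ i = ⟪uᵢ, u⟫, let w = (K + σ²·I)⁻¹ κ, and set σ*² = ⟪u, u⟫ − κᵀ (K + σ²·I)⁻¹ κ. Let f ∈ E and B ≥ 1 with ‖f‖ ≤ B. Let ν be the product measure on ℝⁿ whose i-th factor is the Gaussian measure on ℝ with mean 0 and variance σ². Then ∫ ((∑ᵢ wᵢ (⟪f, uᵢ⟫ + εᵢ)) − ⟪f, u⟫)² dν(ε) ≤ B² σ*². -/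

import Mathlib

open Matrix MeasureTheory ProbabilityTheory
open scoped RealInnerProductSpace NNReal

/-! The residual splits as the bias `⟪f, ∑ wᵢ uᵢ - u⟫` plus the centred noise `∑ wᵢ εᵢ`, whose
variance is `σ² ∑ wᵢ²`; by Cauchy–Schwarz the expected square is at most
`B² ‖∑ wᵢ uᵢ - u‖² + σ² ∑ wᵢ²`. Since `w` solves `(K + σ² I) w = κ`, these normal equations give
`‖∑ wᵢ uᵢ - u‖² + σ² ∑ wᵢ² = ⟪u, u⟫ - w ⬝ᵥ κ = σ*²`, and `B ≥ 1` finishes. -/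

section Noise

variable {ι : Type*} [Fintype ι] {μ : ι → Measure ℝ} [∀ i, IsProbabilityMeasure (μ i)]

theorem integral_sq_eq_variance_add_sq {Ω : Type*} {mΩ : MeasurableSpace Ω} {P : Measure Ω}
    [IsProbabilityMeasure P] {X : Ω → ℝ} (hX : MemLp X 2 P) :
    ∫ ω, X ω ^ 2 ∂P = Var[X; P] + (∫ ω, X ω ∂P) ^ 2 := by
  rw [variance_eq_sub hX]
  simp only [Pi.pow_apply, sub_add_cancel]

theorem integral_sq_const_add_sum_mul_pi (h2 : ∀ i, MemLp id 2 (μ i))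
    (h0 : ∀ i, ∫ x, x ∂μ i = 0) (c : ℝ) (w : ι → ℝ) :
    ∫ ε, (c + ∑ i, w i * ε i) ^ 2 ∂Measure.pi μ = c ^ 2 + ∑ i, w i ^ 2 * Var[id; μ i] := by
  have hterm : ∀ i, MemLp (fun x : ℝ => w i * x) 2 (μ i) := fun i => (h2 i).const_mul (w i)
  have hcoord : ∀ i, MemLp (fun ε : ι → ℝ => w i * ε i) 2 (Measure.pi μ) := fun i =>
    (hterm i).comp_measurePreserving (measurePreserving_eval μ i)
  have hsum : MemLp (fun ε : ι → ℝ => ∑ i, w i * ε i) 2 (Measure.pi μ) :=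
    memLp_finsetSum _ fun i _ => hcoord i
  have hmean : ∫ ε, c + ∑ i, w i * ε i ∂Measure.pi μ = c := by
    rw [integral_add (integrable_const c) (hsum.integrable one_le_two),
      integral_finsetSum _ fun i _ => (hcoord i).integrable one_le_two]
    simp [integral_const_mul, integral_eval, h0]
  have hvar : Var[fun ε => c + ∑ i, w i * ε i; Measure.pi μ] = ∑ i, w i ^ 2 * Var[id; μ i] := by
    have hfun : (fun ε : ι → ℝ => ∑ i, w i * ε i) = ∑ i, fun ε => (fun x => w i * x) (ε i) := by
      ext ε; simp only [Finset.sum_apply]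
    rw [variance_const_add hsum.aestronglyMeasurable, hfun, variance_sum_pi hterm]
    exact Finset.sum_congr rfl fun i _ => variance_const_mul (w i) id (μ i)
  have hX : MemLp (fun ε : ι → ℝ => c + ∑ i, w i * ε i) 2 (Measure.pi μ) :=
    (memLp_const c).add hsum
  rw [integral_sq_eq_variance_add_sq hX, hmean, hvar]
  ring

theorem integral_sq_const_add_sum_mul_gaussianReal (v : ℝ≥0) (c : ℝ) (w : ι → ℝ) :
    ∫ ε, (c + ∑ i, w i * ε i) ^ 2 ∂Measure.pi (fun _ : ι => gaussianReal 0 v) =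
      c ^ 2 + v * ∑ i, w i ^ 2 := by
  rw [integral_sq_const_add_sum_mul_pi (fun _ => memLp_id_gaussianReal 2)
    (fun _ => integral_id_gaussianReal), Finset.mul_sum]
  simp [mul_comm]

end Noise

section Gram

variable {E : Type*} [NormedAddCommGroup E] [InnerProductSpace ℝ E]
  {ι : Type*} [Fintype ι]

theorem posDef_gram_add_smul_one [DecidableEq ι] (u' : ι → E) {s : ℝ} (hs : 0 < s) :
    (gram ℝ u' + s • (1 : Matrix ι ι ℝ)).PosDef :=
  (PosDef.one.smul hs).posSemidef_add (posSemidef_gram ℝ u')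

theorem dotProduct_gram_mulVec_self (u' : ι → E) (x : ι → ℝ) :
    x ⬝ᵥ (gram ℝ u' *ᵥ x) = ‖∑ i, x i • u' i‖ ^ 2 := by
  rw [← real_inner_self_eq_norm_sq, ← star_dotProduct_gram_mulVec, star_trivial]

theorem norm_sum_smul_sub_sq_add_mul_sum_sq [DecidableEq ι] {u : E} {u' : ι → E} {s : ℝ}
    {w : ι → ℝ}
    (hw : (gram ℝ u' + s • (1 : Matrix ι ι ℝ)) *ᵥ w = fun i => ⟪u' i, u⟫) :
    ‖∑ i, w i • u' i - u‖ ^ 2 + s * ∑ i, w i ^ 2 = ⟪u, u⟫ - w ⬝ᵥ fun i => ⟪u' i, u⟫ := by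
  set p := ∑ i, w i • u' i
  have hpu : ⟪p, u⟫ = w ⬝ᵥ fun i => ⟪u' i, u⟫ := by
    simp only [p, sum_inner, real_inner_smul_left, dotProduct]
  have hnormal : ‖p‖ ^ 2 + s * ∑ i, w i ^ 2 = ⟪p, u⟫ := by
    rw [hpu, ← hw, add_mulVec, dotProduct_add, dotProduct_gram_mulVec_self, smul_mulVec,
      one_mulVec, dotProduct_smul, smul_eq_mul]
    simp only [p, dotProduct, sq]
  rw [← real_inner_self_eq_norm_sq, inner_sub_sub_self, real_inner_self_eq_norm_sq,
    real_inner_comm p u, ← hpu]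
  linarith

end Gram

theorem stmt_4 {E : Type*} [NormedAddCommGroup E] [InnerProductSpace ℝ E]
    {n : ℕ} (u : E) (u' : Fin n → E) (σ : ℝ) (hσ : 0 < σ)
    (K : Matrix (Fin n) (Fin n) ℝ) (hK : ∀ i j, K i j = ⟪u' i, u' j⟫)
    (κ : Fin n → ℝ) (hκ : ∀ i, κ i = ⟪u' i, u⟫)
    (w : Fin n → ℝ)
    (hw : w = (K + σ ^ 2 • (1 : Matrix (Fin n) (Fin n) ℝ))⁻¹ *ᵥ κ)
    (σstarSq : ℝ)
    (hσstar : σstarSq =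
      ⟪u, u⟫ - κ ⬝ᵥ ((K + σ ^ 2 • (1 : Matrix (Fin n) (Fin n) ℝ))⁻¹ *ᵥ κ))
    (f : E) (B : ℝ) (hB : 1 ≤ B) (hf : ‖f‖ ≤ B)
    (ν : Measure (Fin n → ℝ))
    (hν : ν = Measure.pi fun _ : Fin n => gaussianReal 0 ⟨σ ^ 2, sq_nonneg σ⟩) :
    ∫ ε, ((∑ i, w i * (⟪f, u' i⟫ + ε i)) - ⟪f, u⟫) ^ 2 ∂ν ≤ B ^ 2 * σstarSq := by
  obtain rfl : K = gram ℝ u' := Matrix.ext hK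
  obtain rfl : κ = fun i => ⟪u' i, u⟫ := funext hκ
  have hAw : (gram ℝ u' + σ ^ 2 • (1 : Matrix (Fin n) (Fin n) ℝ)) *ᵥ w = fun i => ⟪u' i, u⟫ := by
    have hdet := (isUnit_iff_isUnit_det _).mp (posDef_gram_add_smul_one u' (pow_pos hσ 2)).isUnit
    rw [hw, mulVec_mulVec, mul_nonsing_inv _ hdet, one_mulVec]
  set p := ∑ i, w i • u' i
  have hresidual : ∀ ε : Fin n → ℝ,
      (∑ i, w i * (⟪f, u' i⟫ + ε i)) - ⟪f, u⟫ = ⟪f, p - u⟫ + ∑ i, w i * ε i := fun ε => by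
    simp only [p, inner_sub_right, inner_sum, real_inner_smul_right, mul_add,
      Finset.sum_add_distrib]
    ring
  have hbias : ⟪f, p - u⟫ ^ 2 ≤ B ^ 2 * ‖p - u‖ ^ 2 := by
    rw [← mul_pow, ← sq_abs]
    gcongr
    exact (abs_real_inner_le_norm f _).trans (by gcongr)
  have hvariance : σstarSq = ‖p - u‖ ^ 2 + σ ^ 2 * ∑ i, w i ^ 2 := by
    rw [hσstar, ← hw, dotProduct_comm, norm_sum_smul_sub_sq_add_mul_sum_sq hAw]
  subst hν
  calc _ = ⟪f, p - u⟫ ^ 2 + σ ^ 2 * ∑ i, w i ^ 2 := by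
        simp_rw [hresidual]
        exact integral_sq_const_add_sum_mul_gaussianReal _ _ _
    _ ≤ B ^ 2 * ‖p - u‖ ^ 2 + B ^ 2 * (σ ^ 2 * ∑ i, w i ^ 2) :=
        add_le_add hbias (le_mul_of_one_le_left (by positivity) (one_le_pow₀ hB))
    _ = B ^ 2 * σstarSq := by rw [hvariance]; ring
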